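/- Pre-image of the order-matching clearing operator in the centred framework: for every X ∈ L⁰, {Y ∈ E^m : C'(Y) = X} = Γ^m(X). -/

import Mathlib

open scoped BigOperators

namespace COB

/-- Vectors of queue sizes indexed by prices in `I = {−d',…,d'}` (functions `ℤ → ℕ`
vanishing outside `I`; the support condition is part of membership in `Em`). -/
abbrev VecC := ℤ → ℕ

/-- Pairs (buy side, sell side). -/
abbrev EC := VecC × VecC

/-- A vector is supported in `{−d',…,d'}`. -/
def suppIn (d' : ℕ) (Z : VecC) : Prop :=
  ∀ j : ℤ, Z j ≠ 0 → -(d' : ℤ) ≤ j ∧ j ≤ (d' : ℤ)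

/-- Price support of a vector, inside `I = {−d',…,d'}`. -/
noncomputable def suppC (d' : ℕ) (Z : VecC) : Finset ℤ :=
  (Finset.Icc (-(d' : ℤ)) (d' : ℤ)).filter fun j => 0 < Z j

/-- `sup` of a finite set of prices, with the convention `sup ∅ = −d'`. -/
def supD (d' : ℕ) (S : Finset ℤ) : ℤ := if h : S.Nonempty then S.max' h else -(d' : ℤ)

/-- `inf` of a finite set of prices, with the convention `inf ∅ = d'`. -/
def infD (d' : ℕ) (S : Finset ℤ) : ℤ := if h : S.Nonempty then S.min' h else (d' : ℤ)

/-- bid price `b(X) = sup supp(X⁺)` (convention `sup supp(0) = −d'`). -/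
noncomputable def bC (d' : ℕ) (X : EC) : ℤ := supD d' (suppC d' X.1)

/-- ask price `a(X) = inf supp(X⁻)` (convention `inf supp(0) = d'`). -/
noncomputable def aC (d' : ℕ) (X : EC) : ℤ := infD d' (suppC d' X.2)

/-- `E^m`: configurations supported in `I` with nonempty buy and sell sides. -/
def Em (d' : ℕ) : Set EC :=
  {X | suppIn d' X.1 ∧ suppIn d' X.2 ∧ X.1 ≠ 0 ∧ X.2 ≠ 0}

/-- `L⁰`: elements of `E^m` with `a(X) > b(X)`. -/
def L0 (d' : ℕ) : Set EC := {X | X ∈ Em d' ∧ bC d' X < aC d' X}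

/-- `p̂`: the parity of `p` (`0` if `p` is even, `1` if `p` is odd). -/
def hatp (p : ℤ) : ℤ := p % 2

/-- `⌈p/2⌉` for an integer `p`. -/
def ceilHalf (p : ℤ) : ℤ := Int.fdiv (p + 1) 2

/-- `[p,p'] = ⌈p'/2⌉ − ⌈p/2⌉`. -/
def shift (p p' : ℤ) : ℤ := ceilHalf p' - ceilHalf p

/-- The centred state space `L^m`. -/
def Lm (d' : ℕ) : Set (EC × ℤ) :=
  {Xp | Xp.1 ∈ Em d' ∧ bC d' Xp.1 < aC d' Xp.1 ∧
    aC d' Xp.1 + bC d' Xp.1 + hatp Xp.2 = 0}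

/-- The truncating shift `σ_i` on a single vector. -/
def sigmaV (d' : ℕ) (i : ℤ) (Y : VecC) : VecC := fun j =>
  if min (d' : ℤ) ((d' : ℤ) - i) < j ∨ j < max (-(d' : ℤ)) (-(d' : ℤ) - i) then 0
  else Y (j + i)

/-- The truncating shift `σ_i` acting componentwise on pairs. -/
def sigmaP (d' : ℕ) (i : ℤ) (Y : EC) : EC := (sigmaV d' i Y.1, sigmaV d' i Y.2)

/-- The centering operator `J(Y,p) = (σ_{[p,p']}(Y), p')`, `p' = p + a(Y) + b(Y) + p̂`. -/
noncomputable def J (d' : ℕ) (Y : EC) (p : ℤ) : EC × ℤ :=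
  (sigmaP d' (shift p (p + aC d' Y + bC d' Y + hatp p)) Y,
    p + aC d' Y + bC d' Y + hatp p)


/-- `B_X(k) = Σ_{i ≥ k} X⁺_i` (sum over `I`). -/
noncomputable def BXC (d' : ℕ) (X : EC) (k : ℤ) : ℕ :=
  ∑ j ∈ Finset.Icc (-(d' : ℤ)) (d' : ℤ), if k ≤ j then X.1 j else 0

/-- `S_X(k) = Σ_{i ≤ k} X⁻_i` (sum over `I`). -/
noncomputable def SXC (d' : ℕ) (X : EC) (k : ℤ) : ℕ :=
  ∑ j ∈ Finset.Icc (-(d' : ℤ)) (d' : ℤ), if j ≤ k then X.2 j else 0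

/-- `g_X(k) = S_X(k) − B_X(k)`. -/
noncomputable def gXC (d' : ℕ) (X : EC) (k : ℤ) : ℤ := (SXC d' X k : ℤ) - (BXC d' X k : ℤ)

/-- `p_A(X) = inf{k ∈ I : g_X(k) > 0}`, convention `inf ∅ = d'+1`. -/
noncomputable def pAC (d' : ℕ) (X : EC) : ℤ :=
  if h : ((Finset.Icc (-(d' : ℤ)) (d' : ℤ)).filter fun k => 0 < gXC d' X k).Nonempty
  then ((Finset.Icc (-(d' : ℤ)) (d' : ℤ)).filter fun k => 0 < gXC d' X k).min' h
  else (d' : ℤ) + 1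

/-- `p_B(X) = sup{k ∈ I : g_X(k) < 0}`, convention `sup ∅ = −d'−1`. -/
noncomputable def pBC (d' : ℕ) (X : EC) : ℤ :=
  if h : ((Finset.Icc (-(d' : ℤ)) (d' : ℤ)).filter fun k => gXC d' X k < 0).Nonempty
  then ((Finset.Icc (-(d' : ℤ)) (d' : ℤ)).filter fun k => gXC d' X k < 0).max' h
  else -(d' : ℤ) - 1

/-- `τ_i`: zero out entries at prices `> i`. -/
def tauLowC (d' : ℕ) (i : ℤ) (z : VecC) : VecC := fun j =>
  if j ≤ i ∧ -(d' : ℤ) ≤ j ∧ j ≤ (d' : ℤ) then z j else 0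

/-- `τ^i`: zero out entries at prices `< i`. -/
def tauHighC (d' : ℕ) (i : ℤ) (z : VecC) : VecC := fun j =>
  if i ≤ j ∧ -(d' : ℤ) ≤ j ∧ j ≤ (d' : ℤ) then z j else 0

/-- Standard basis vector at price `i ∈ I`. -/
def eC (d' : ℕ) (i : ℤ) : VecC := fun j =>
  if j = i ∧ -(d' : ℤ) ≤ i ∧ i ≤ (d' : ℤ) then 1 else 0

/-- Buy side after order-matching clearing (same formulas as in the fixed-price
framework). -/
noncomputable def clearPlusC (d' : ℕ) (X : EC) : VecC :=
  if gXC d' X (pBC d' X) ≤ -(X.1 (pBC d' X) : ℤ) then tauLowC d' (pBC d' X) X.1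
  else fun j => tauLowC d' (pBC d' X - 1) X.1 j +
    (max 0 (-(gXC d' X (pBC d' X)))).toNat * eC d' (pBC d' X) j

/-- Sell side after order-matching clearing. -/
noncomputable def clearMinusC (d' : ℕ) (X : EC) : VecC :=
  if (X.2 (pAC d' X) : ℤ) ≤ gXC d' X (pAC d' X) then tauHighC d' (pAC d' X) X.2
  else fun j => tauHighC d' (pAC d' X + 1) X.2 j +
    (max 0 (gXC d' X (pAC d' X))).toNat * eC d' (pAC d' X) j

/-- The order-matching clearing operator `C'` of the centred framework. -/
noncomputable def clearC (d' : ℕ) (X : EC) : EC := (clearPlusC d' X, clearMinusC d' X)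

/-- The centred clearing operator `C^m(X,p) = J(C'(X), p)`. -/
noncomputable def Cm (d' : ℕ) (X : EC) (p : ℤ) : EC × ℤ := J d' (clearC d' X) p

/-- The set `Γ^m(X)`: pre-image candidates of `X` under the order-matching clearing
operator `C'`. -/
def GammaM (d' : ℕ) (X : EC) : Set EC :=
  {Y | Y ∈ Em d' ∧
    (∀ j : ℤ, X.1 j ≤ Y.1 j ∧ X.2 j ≤ Y.2 j) ∧
    (∑ j ∈ Finset.Icc (-(d' : ℤ)) (d' : ℤ), ((Y.1 j : ℤ) - (X.1 j : ℤ))) =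
      (∑ j ∈ Finset.Icc (-(d' : ℤ)) (d' : ℤ), ((Y.2 j : ℤ) - (X.2 j : ℤ))) ∧
    supD d' ((Finset.Icc (-(d' : ℤ)) (d' : ℤ)).filter fun j => X.2 j < Y.2 j) ≤
      infD d' ((Finset.Icc (-(d' : ℤ)) (d' : ℤ)).filter fun j => X.1 j < Y.1 j) ∧
    supD d' ((Finset.Icc (-(d' : ℤ)) (d' : ℤ)).filter fun j => X.2 j < Y.2 j) ≤ aC d' X ∧
    bC d' X ≤ infD d' ((Finset.Icc (-(d' : ℤ)) (d' : ℤ)).filter fun j => X.1 j < Y.1 j)}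

/-- The set `Λ(X,p)`: pre-image of `(X,p)` under the centering operator `J`. -/
def LambdaSet (d' : ℕ) (X : EC) (p : ℤ) : Set (EC × ℤ) :=
  {Yp | Yp.1 ∈ Em d' ∧
    supD d' (suppC d' X.2) - (d' : ℤ) ≤ shift p Yp.2 ∧
    shift p Yp.2 ≤ (d' : ℤ) + infD d' (suppC d' X.1) ∧
    ∃ af bf : ℤ → ℕ,
      Yp.1.1 = (fun j => sigmaV d' (shift p Yp.2) X.1 j +
        if -(d' : ℤ) ≤ j ∧ j ≤ -(d' : ℤ) - shift p Yp.2 - 1 then bf j else 0) ∧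
      Yp.1.2 = (fun j => sigmaV d' (shift p Yp.2) X.2 j +
        if (d' : ℤ) - shift p Yp.2 + 1 ≤ j ∧ j ≤ (d' : ℤ) then af j else 0)}

/-!
The imbalance `g_Y = S_Y - B_Y` is nondecreasing, and `C'` keeps the buy orders of `Y` below
`p_B(Y)` and the sell orders above `p_A(Y)`, the prices where `g_Y` changes sign.

For `X ∈ L⁰`, `g_X` is negative up to `b(X)`, zero strictly between `b(X)` and `a(X)` and positive
from `a(X)` on. If `Y = X + Z` with `Z` as in `Γ^m(X)`, then `g_Z` has the same shape with the
thresholds `sup supp Z⁻ - 1` and `inf supp Z⁺ + 1`, and the two patterns add up; this locates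
`p_B(Y)` and `p_A(Y)` and gives `C'(Y) = X`.

Conversely, if `C'(Y) = X`, the removed orders `Z = Y - X` lie at or above `p_B` on the buy side
and at or below `p_A` on the sell side. At most one of the two boundary queues is partially
executed, which separates `supp Z⁻` from `supp Z⁺`, and both sides lose the same volume
`max (B_Y(p_B + 1)) (S_Y(p_B)) = max (S_Y(p_A - 1)) (B_Y(p_A))`.
-/

open Finset

section
variable {d' : ℕ}

lemma suppIn.eq_zero {v : VecC} (hv : suppIn d' v) {j : ℤ} (hj : j < -d' ∨ (d' : ℤ) < j) :
    v j = 0 := by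
  by_contra h
  have := hv j h
  omega

lemma suppIn.tsub {v : VecC} (hv : suppIn d' v) (w : VecC) : suppIn d' (v - w) :=
  fun j hj => hv j fun h => hj (by simp [h])

lemma mem_suppC {v : VecC} {j : ℤ} :
    j ∈ suppC d' v ↔ (-(d' : ℤ) ≤ j ∧ j ≤ d') ∧ 0 < v j := by
  rw [suppC, mem_filter, mem_Icc]

lemma suppC_nonempty {v : VecC} (hv : suppIn d' v) (h : v ≠ 0) : (suppC d' v).Nonempty := by
  obtain ⟨j, hj⟩ := Function.ne_iff.mp h
  exact ⟨j, mem_suppC.2 ⟨hv j hj, Nat.pos_of_ne_zero hj⟩⟩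

lemma supD_mem {S : Finset ℤ} (hS : S.Nonempty) : supD d' S ∈ S := by
  rw [supD, dif_pos hS]
  exact max'_mem S hS

lemma infD_mem {S : Finset ℤ} (hS : S.Nonempty) : infD d' S ∈ S := by
  rw [infD, dif_pos hS]
  exact min'_mem S hS

lemma le_supD {S : Finset ℤ} {j : ℤ} (hj : j ∈ S) : j ≤ supD d' S := by
  rw [supD, dif_pos ⟨j, hj⟩]
  exact le_max' S j hj

lemma infD_le {S : Finset ℤ} {j : ℤ} (hj : j ∈ S) : infD d' S ≤ j := by
  rw [infD, dif_pos ⟨j, hj⟩]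
  exact min'_le S j hj

lemma supD_le {S : Finset ℤ} {c : ℤ} (hc : -(d' : ℤ) ≤ c) (h : ∀ j ∈ S, j ≤ c) :
    supD d' S ≤ c := by
  unfold supD
  split_ifs with hS
  exacts [max'_le S hS c h, hc]

lemma le_infD {S : Finset ℤ} {c : ℤ} (hc : c ≤ d') (h : ∀ j ∈ S, c ≤ j) : c ≤ infD d' S := by
  unfold infD
  split_ifs with hS
  exacts [le_min' S hS c h, hc]

lemma nonempty_of_neg_lt_supD {S : Finset ℤ} (h : -(d' : ℤ) < supD d' S) : S.Nonempty := by
  by_contra hS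
  rw [supD, dif_neg hS] at h
  exact lt_irrefl _ h

lemma nonempty_of_infD_lt {S : Finset ℤ} (h : infD d' S < d') : S.Nonempty := by
  by_contra hS
  rw [infD, dif_neg hS] at h
  exact lt_irrefl _ h

lemma supD_suppC_mem_Icc (v : VecC) : supD d' (suppC d' v) ∈ Icc (-(d' : ℤ)) d' := by
  by_cases h : (suppC d' v).Nonempty
  · exact filter_subset _ _ (supD_mem h)
  · rw [supD, dif_neg h, mem_Icc]
    omega

lemma infD_suppC_mem_Icc (v : VecC) : infD d' (suppC d' v) ∈ Icc (-(d' : ℤ)) d' := by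
  by_cases h : (suppC d' v).Nonempty
  · exact filter_subset _ _ (infD_mem h)
  · rw [infD, dif_neg h, mem_Icc]
    omega

lemma pos_supD_suppC {v : VecC} (h : (suppC d' v).Nonempty) : 0 < v (supD d' (suppC d' v)) :=
  (mem_suppC.1 (supD_mem h)).2

lemma pos_infD_suppC {v : VecC} (h : (suppC d' v).Nonempty) : 0 < v (infD d' (suppC d' v)) :=
  (mem_suppC.1 (infD_mem h)).2

lemma eq_zero_of_supD_suppC_lt {v : VecC} (hv : suppIn d' v) {j : ℤ}
    (hj : supD d' (suppC d' v) < j) : v j = 0 := by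
  by_contra h
  have := le_supD (d' := d') (mem_suppC.2 ⟨hv j h, Nat.pos_of_ne_zero h⟩)
  omega

lemma eq_zero_of_lt_infD_suppC {v : VecC} (hv : suppIn d' v) {j : ℤ}
    (hj : j < infD d' (suppC d' v)) : v j = 0 := by
  by_contra h
  have := infD_le (d' := d') (mem_suppC.2 ⟨hv j h, Nat.pos_of_ne_zero h⟩)
  omega

end

section
variable {d' : ℕ} (V : EC)

lemma SXC_mono {k k' : ℤ} (h : k ≤ k') : SXC d' V k ≤ SXC d' V k' :=
  sum_le_sum fun j _ => by split_ifs <;> omega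

lemma BXC_anti {k k' : ℤ} (h : k ≤ k') : BXC d' V k' ≤ BXC d' V k :=
  sum_le_sum fun j _ => by split_ifs <;> omega

lemma gXC_mono : Monotone (gXC d' V) := fun k k' h => by
  have := SXC_mono (d' := d') V h
  have := BXC_anti (d' := d') V h
  unfold gXC
  omega

lemma SXC_eq_zero {k : ℤ} (h : ∀ j ≤ k, V.2 j = 0) : SXC d' V k = 0 :=
  sum_eq_zero fun j _ => by split_ifs with hj <;> simp [h j, hj]

lemma BXC_eq_zero {k : ℤ} (h : ∀ j, k ≤ j → V.1 j = 0) : BXC d' V k = 0 :=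
  sum_eq_zero fun j _ => by split_ifs with hj <;> simp [h j, hj]

lemma SXC_eq_of_eq_zero {k k' : ℤ} (hk : k ≤ k') (h : ∀ j, k < j → j ≤ k' → V.2 j = 0) :
    SXC d' V k' = SXC d' V k :=
  sum_congr rfl fun j _ => by
    split_ifs <;> first | rfl | omega | exact h j (by omega) (by omega)

lemma BXC_eq_of_eq_zero {k k' : ℤ} (hk : k ≤ k') (h : ∀ j, k ≤ j → j < k' → V.1 j = 0) :
    BXC d' V k = BXC d' V k' :=
  sum_congr rfl fun j _ => by
    split_ifs <;> first | rfl | omega | exact h j (by omega) (by omega)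

lemma SXC_eq_add (hV : suppIn d' V.2) (k : ℤ) : SXC d' V k = SXC d' V (k - 1) + V.2 k := by
  have hk : V.2 k = ∑ j ∈ Icc (-(d' : ℤ)) d', if j = k then V.2 j else 0 := by
    rw [sum_ite_eq']
    split_ifs with h
    · rfl
    · exact hV.eq_zero (by rw [mem_Icc] at h; omega)
  rw [hk, SXC, SXC, ← sum_add_distrib]
  exact sum_congr rfl fun j _ => by split_ifs <;> first | rfl | omega

lemma BXC_eq_add (hV : suppIn d' V.1) (k : ℤ) : BXC d' V k = BXC d' V (k + 1) + V.1 k := by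
  have hk : V.1 k = ∑ j ∈ Icc (-(d' : ℤ)) d', if j = k then V.1 j else 0 := by
    rw [sum_ite_eq']
    split_ifs with h
    · rfl
    · exact hV.eq_zero (by rw [mem_Icc] at h; omega)
  rw [hk, BXC, BXC, ← sum_add_distrib]
  exact sum_congr rfl fun j _ => by split_ifs <;> first | rfl | omega

lemma BXC_neg_eq_sum : BXC d' V (-d') = ∑ j ∈ Icc (-(d' : ℤ)) d', V.1 j :=
  sum_congr rfl fun _ hj => if_pos (mem_Icc.1 hj).1

lemma SXC_eq_sum : SXC d' V d' = ∑ j ∈ Icc (-(d' : ℤ)) d', V.2 j :=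
  sum_congr rfl fun _ hj => if_pos (mem_Icc.1 hj).2

variable {V} {W : EC}

lemma SXC_tsub_add (h : W.2 ≤ V.2) (k : ℤ) : SXC d' (V - W) k + SXC d' W k = SXC d' V k := by
  rw [SXC, SXC, SXC, ← sum_add_distrib]
  exact sum_congr rfl fun j _ => by split_ifs <;> simp [Nat.sub_add_cancel (h j)]

lemma BXC_tsub_add (h : W.1 ≤ V.1) (k : ℤ) : BXC d' (V - W) k + BXC d' W k = BXC d' V k := by
  rw [BXC, BXC, BXC, ← sum_add_distrib]
  exact sum_congr rfl fun j _ => by split_ifs <;> simp [Nat.sub_add_cancel (h j)]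

lemma gXC_eq_add_tsub (h : W ≤ V) : gXC d' V = gXC d' W + gXC d' (V - W) := by
  funext k
  have := SXC_tsub_add h.2 k (d' := d')
  have := BXC_tsub_add h.1 k (d' := d')
  simp only [Pi.add_apply, gXC]
  omega

end

/-- The sign conditions are only imposed on the price grid, so that `g_Z` has a sign pattern
also for `Z = 0`. -/
structure HasSignPattern (d' : ℕ) (f : ℤ → ℤ) (p q : ℤ) : Prop where
  neg : ∀ k, -(d' : ℤ) ≤ k → k ≤ p → f k < 0
  zero : ∀ k, p < k → k < q → f k = 0
  pos : ∀ k, q ≤ k → k ≤ (d' : ℤ) → 0 < f k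

namespace HasSignPattern

variable {d' : ℕ} {f g : ℤ → ℤ} {p q p' q' : ℤ}

lemma nonpos (h : HasSignPattern d' f p q) {k : ℤ} (hk : -(d' : ℤ) ≤ k) (hkq : k < q) :
    f k ≤ 0 := by
  by_cases hkp : k ≤ p
  · exact (h.neg k hk hkp).le
  · exact (h.zero k (by omega) hkq).le

lemma nonneg (h : HasSignPattern d' f p q) {k : ℤ} (hpk : p < k) (hk : k ≤ (d' : ℤ)) :
    0 ≤ f k := by
  by_cases hqk : q ≤ k
  · exact (h.pos k hqk hk).le
  · exact (h.zero k hpk (by omega)).ge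

lemma lt (h : HasSignPattern d' f p q) (hp : -(d' : ℤ) ≤ p) (hp' : p ≤ d') : p < q := by
  by_contra hqp
  have := h.neg p hp le_rfl
  have := h.pos p (by omega) hp'
  omega

lemma add (hf : HasSignPattern d' f p q) (hg : HasSignPattern d' g p' q') (h₁ : p < q')
    (h₂ : p' < q) : HasSignPattern d' (f + g) (max p p') (min q q') where
  neg k hk hkp := by
    rcases le_max_iff.1 hkp with hkp | hkp
    · exact add_neg_of_neg_of_nonpos (hf.neg k hk hkp) (hg.nonpos hk (by omega))
    · exact add_neg_of_nonpos_of_neg (hf.nonpos hk (by omega)) (hg.neg k hk hkp)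
  zero k hpk hkq := by
    rw [Pi.add_apply, hf.zero k (by omega) (by omega), hg.zero k (by omega) (by omega),
      add_zero]
  pos k hqk hk := by
    rcases min_le_iff.1 hqk with hqk | hqk
    · exact add_pos_of_pos_of_nonneg (hf.pos k hqk hk) (hg.nonneg (by omega) hk)
    · exact add_pos_of_nonneg_of_pos (hf.nonneg (by omega) hk) (hg.pos k hqk hk)

end HasSignPattern

section
variable {d' : ℕ} {V : EC}

lemma pBC_mem (h : -(d' : ℤ) ≤ pBC d' V) :
    pBC d' V ∈ (Icc (-(d' : ℤ)) d').filter fun k => gXC d' V k < 0 := by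
  by_cases hne : ((Icc (-(d' : ℤ)) d').filter fun k => gXC d' V k < 0).Nonempty
  · rw [pBC, dif_pos hne]
    exact max'_mem _ hne
  · rw [pBC, dif_neg hne] at h
    omega

lemma pAC_mem (h : pAC d' V ≤ d') :
    pAC d' V ∈ (Icc (-(d' : ℤ)) d').filter fun k => 0 < gXC d' V k := by
  by_cases hne : ((Icc (-(d' : ℤ)) d').filter fun k => 0 < gXC d' V k).Nonempty
  · rw [pAC, dif_pos hne]
    exact min'_mem _ hne
  · rw [pAC, dif_neg hne] at h
    omega

lemma le_pBC {k : ℤ} (hk : k ∈ Icc (-(d' : ℤ)) d') (hg : gXC d' V k < 0) : k ≤ pBC d' V := by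
  have hmem : k ∈ (Icc (-(d' : ℤ)) d').filter fun k => gXC d' V k < 0 :=
    mem_filter.2 ⟨hk, hg⟩
  rw [pBC, dif_pos ⟨k, hmem⟩]
  exact le_max' _ k hmem

lemma pAC_le {k : ℤ} (hk : k ∈ Icc (-(d' : ℤ)) d') (hg : 0 < gXC d' V k) : pAC d' V ≤ k := by
  have hmem : k ∈ (Icc (-(d' : ℤ)) d').filter fun k => 0 < gXC d' V k :=
    mem_filter.2 ⟨hk, hg⟩
  rw [pAC, dif_pos ⟨k, hmem⟩]
  exact min'_le _ k hmem

lemma hasSignPattern_gXC (hp : -(d' : ℤ) ≤ pBC d' V) (hq : pAC d' V ≤ d') :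
    HasSignPattern d' (gXC d' V) (pBC d' V) (pAC d' V) := by
  obtain ⟨hpI, hgp⟩ := mem_filter.1 (pBC_mem hp)
  obtain ⟨hqI, hgq⟩ := mem_filter.1 (pAC_mem hq)
  rw [mem_Icc] at hpI hqI
  refine ⟨fun k _ hk => (gXC_mono V hk).trans_lt hgp, fun k hpk hkq => ?_,
    fun k hk _ => hgq.trans_le (gXC_mono V hk)⟩
  have hk : k ∈ Icc (-(d' : ℤ)) d' := mem_Icc.2 ⟨by omega, by omega⟩
  refine le_antisymm (not_lt.1 fun hpos => ?_) (not_lt.1 fun hneg => ?_)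
  · exact absurd (pAC_le hk hpos) (by omega)
  · exact absurd (le_pBC hk hneg) (by omega)

lemma pBC_eq {p q : ℤ} (h : HasSignPattern d' (gXC d' V) p q) (hp : -(d' : ℤ) ≤ p)
    (hp' : p ≤ d') : pBC d' V = p := by
  have hmem : p ∈ (Icc (-(d' : ℤ)) d').filter fun k => gXC d' V k < 0 :=
    mem_filter.2 ⟨mem_Icc.2 ⟨hp, hp'⟩, h.neg p hp le_rfl⟩
  rw [pBC, dif_pos ⟨p, hmem⟩]
  refine le_antisymm (max'_le _ _ _ fun k hk => ?_) (le_max' _ p hmem)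
  obtain ⟨hkI, hk⟩ := mem_filter.1 hk
  by_contra hpk
  have := h.nonneg (not_le.1 hpk) (mem_Icc.1 hkI).2
  omega

lemma pAC_eq {p q : ℤ} (h : HasSignPattern d' (gXC d' V) p q) (hq : -(d' : ℤ) ≤ q)
    (hq' : q ≤ d') : pAC d' V = q := by
  have hmem : q ∈ (Icc (-(d' : ℤ)) d').filter fun k => 0 < gXC d' V k :=
    mem_filter.2 ⟨mem_Icc.2 ⟨hq, hq'⟩, h.pos q le_rfl hq'⟩
  rw [pAC, dif_pos ⟨q, hmem⟩]
  refine le_antisymm (min'_le _ q hmem) (le_min' _ _ _ fun k hk => ?_)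
  obtain ⟨hkI, hk⟩ := mem_filter.1 hk
  by_contra hkq
  have := h.nonpos (mem_Icc.1 hkI).1 (not_le.1 hkq)
  omega

end

section
variable {d' : ℕ} {Y : EC}

lemma neg_le_pBC_of_clearPlusC_ne_zero (h : clearPlusC d' Y ≠ 0) :
    -(d' : ℤ) ≤ pBC d' Y := by
  by_contra hlt
  refine h (funext fun j => ?_)
  unfold clearPlusC tauLowC eC
  split_ifs <;> simp_all <;> omega

lemma pAC_le_of_clearMinusC_ne_zero (h : clearMinusC d' Y ≠ 0) : pAC d' Y ≤ d' := by
  by_contra hlt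
  refine h (funext fun j => ?_)
  unfold clearMinusC tauHighC eC
  split_ifs <;> simp_all <;> omega

lemma clearPlusC_apply (hY : suppIn d' Y.1) (hp : -(d' : ℤ) ≤ pBC d' Y) (j : ℤ) :
    clearPlusC d' Y j =
      if j < pBC d' Y then Y.1 j
      else if j = pBC d' Y then min (Y.1 j) (-gXC d' Y (pBC d' Y)).toNat else 0 := by
  obtain ⟨hpI, hg⟩ := mem_filter.1 (pBC_mem hp)
  rw [mem_Icc] at hpI
  have hj : j < -d' → Y.1 j = 0 := fun h => hY.eq_zero (Or.inl h)
  unfold clearPlusC tauLowC eC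
  split_ifs <;> beta_reduce <;> split_ifs <;> subst_vars <;> omega

lemma clearMinusC_apply (hY : suppIn d' Y.2) (hq : pAC d' Y ≤ d') (j : ℤ) :
    clearMinusC d' Y j =
      if pAC d' Y < j then Y.2 j
      else if j = pAC d' Y then min (Y.2 j) (gXC d' Y (pAC d' Y)).toNat else 0 := by
  obtain ⟨hqI, hg⟩ := mem_filter.1 (pAC_mem hq)
  rw [mem_Icc] at hqI
  have hj : (d' : ℤ) < j → Y.2 j = 0 := fun h => hY.eq_zero (Or.inr h)
  unfold clearMinusC tauHighC eC
  split_ifs <;> beta_reduce <;> split_ifs <;> subst_vars <;> omega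

lemma clearPlusC_le (hY : suppIn d' Y.1) (hp : -(d' : ℤ) ≤ pBC d' Y) :
    clearPlusC d' Y ≤ Y.1 :=
  Pi.le_def.2 fun j => by rw [clearPlusC_apply hY hp]; split_ifs <;> omega

lemma clearMinusC_le (hY : suppIn d' Y.2) (hq : pAC d' Y ≤ d') : clearMinusC d' Y ≤ Y.2 :=
  Pi.le_def.2 fun j => by rw [clearMinusC_apply hY hq]; split_ifs <;> omega

lemma clearPlusC_eq_zero_of_lt (hY : suppIn d' Y.1) (hp : -(d' : ℤ) ≤ pBC d' Y) {j : ℤ}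
    (hj : pBC d' Y < j) : clearPlusC d' Y j = 0 := by
  rw [clearPlusC_apply hY hp, if_neg (by omega), if_neg (by omega)]

lemma clearMinusC_eq_zero_of_lt (hY : suppIn d' Y.2) (hq : pAC d' Y ≤ d') {j : ℤ}
    (hj : j < pAC d' Y) : clearMinusC d' Y j = 0 := by
  rw [clearMinusC_apply hY hq, if_neg (by omega), if_neg (by omega)]

lemma pBC_lt_or_eq_of_tsub_clearPlusC_ne_zero (hY : suppIn d' Y.1)
    (hp : -(d' : ℤ) ≤ pBC d' Y) {j : ℤ} (hj : Y.1 j - clearPlusC d' Y j ≠ 0) :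
    pBC d' Y < j ∨ j = pBC d' Y ∧ BXC d' Y (pBC d' Y + 1) < SXC d' Y (pBC d' Y) := by
  have := BXC_eq_add Y hY (pBC d' Y)
  rw [clearPlusC_apply hY hp] at hj
  unfold gXC at hj
  split_ifs at hj <;> subst_vars <;> omega

lemma lt_pAC_or_eq_of_tsub_clearMinusC_ne_zero (hY : suppIn d' Y.2)
    (hq : pAC d' Y ≤ d') {i : ℤ} (hi : Y.2 i - clearMinusC d' Y i ≠ 0) :
    i < pAC d' Y ∨ i = pAC d' Y ∧ SXC d' Y (pAC d' Y - 1) < BXC d' Y (pAC d' Y) := by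
  have := SXC_eq_add Y hY (pAC d' Y)
  rw [clearMinusC_apply hY hq] at hi
  unfold gXC at hi
  split_ifs at hi <;> subst_vars <;> omega

lemma BXC_tsub_clearC (hY : suppIn d' Y.1) (hp : -(d' : ℤ) ≤ pBC d' Y) :
    BXC d' (Y - clearC d' Y) (-d') = max (BXC d' Y (pBC d' Y + 1)) (SXC d' Y (pBC d' Y)) := by
  have hbelow : BXC d' (Y - clearC d' Y) (-d') = BXC d' (Y - clearC d' Y) (pBC d' Y) :=
    BXC_eq_of_eq_zero _ hp fun j _ hj => by
      by_contra h
      rcases pBC_lt_or_eq_of_tsub_clearPlusC_ne_zero hY hp h with h | h <;> omega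
  have hstep := BXC_eq_add (Y - clearC d' Y) (hY.tsub _) (pBC d' Y)
  have hsplit : BXC d' (Y - clearC d' Y) (pBC d' Y + 1) + BXC d' (clearC d' Y) (pBC d' Y + 1) =
      BXC d' Y (pBC d' Y + 1) := BXC_tsub_add (clearPlusC_le hY hp) _
  have habove : BXC d' (clearC d' Y) (pBC d' Y + 1) = 0 :=
    BXC_eq_zero _ fun j hj => clearPlusC_eq_zero_of_lt hY hp (by omega)
  have hat := clearPlusC_apply hY hp (pBC d' Y)
  rw [if_neg (lt_irrefl _), if_pos rfl] at hat
  have := BXC_eq_add Y hY (pBC d' Y)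
  have := (mem_filter.1 (pBC_mem hp)).2
  simp only [clearC, Prod.fst_sub, Pi.sub_apply] at *
  unfold gXC at *
  omega

lemma SXC_tsub_clearC (hY : suppIn d' Y.2) (hq : pAC d' Y ≤ d') :
    SXC d' (Y - clearC d' Y) d' = max (SXC d' Y (pAC d' Y - 1)) (BXC d' Y (pAC d' Y)) := by
  have habove : SXC d' (Y - clearC d' Y) d' = SXC d' (Y - clearC d' Y) (pAC d' Y) :=
    SXC_eq_of_eq_zero _ hq fun i hi _ => by
      by_contra h
      rcases lt_pAC_or_eq_of_tsub_clearMinusC_ne_zero hY hq h with h | h <;> omega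
  have hstep := SXC_eq_add (Y - clearC d' Y) (hY.tsub _) (pAC d' Y)
  have hsplit : SXC d' (Y - clearC d' Y) (pAC d' Y - 1) + SXC d' (clearC d' Y) (pAC d' Y - 1) =
      SXC d' Y (pAC d' Y - 1) := SXC_tsub_add (clearMinusC_le hY hq) _
  have hbelow : SXC d' (clearC d' Y) (pAC d' Y - 1) = 0 :=
    SXC_eq_zero _ fun i hi => clearMinusC_eq_zero_of_lt hY hq (by omega)
  have hat := clearMinusC_apply hY hq (pAC d' Y)
  rw [if_neg (lt_irrefl _), if_pos rfl] at hat
  have := SXC_eq_add Y hY (pAC d' Y)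
  have := (mem_filter.1 (pAC_mem hq)).2
  simp only [clearC, Prod.snd_sub, Pi.sub_apply] at *
  unfold gXC at *
  omega

end

namespace HasSignPattern

variable {d' : ℕ} {V : EC} {p q : ℤ}

lemma max_BXC_SXC_eq (h : HasSignPattern d' (gXC d' V) p q) (hp : -(d' : ℤ) ≤ p)
    (hp' : p ≤ d') :
    max (BXC d' V (p + 1)) (SXC d' V p) = max (SXC d' V (q - 1)) (BXC d' V q) := by
  have hpq := h.lt hp hp'
  rcases eq_or_lt_of_le (show p + 1 ≤ q by omega) with hq | hq
  · rw [← hq, add_sub_cancel_right, max_comm]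
  · have h₁ := h.zero (p + 1) (by omega) hq
    have h₂ := h.zero (q - 1) (by omega) (by omega)
    have := SXC_mono (d' := d') V (show p ≤ p + 1 by omega)
    have := SXC_mono (d' := d') V (show p + 1 ≤ q - 1 by omega)
    have := BXC_anti (d' := d') V (show q - 1 ≤ q by omega)
    have := BXC_anti (d' := d') V (show p + 1 ≤ q - 1 by omega)
    unfold gXC at h₁ h₂
    omega

lemma eq_succ_of_BXC_lt_SXC (h : HasSignPattern d' (gXC d' V) p q) (hp : -(d' : ℤ) ≤ p)
    (hp' : p ≤ d') (hlt : BXC d' V (p + 1) < SXC d' V p) : q = p + 1 := by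
  have hpq := h.lt hp hp'
  by_contra hne
  have := h.zero (p + 1) (by omega) (by omega)
  have := SXC_mono (d' := d') V (show p ≤ p + 1 by omega)
  unfold gXC at *
  omega

lemma eq_succ_of_SXC_lt_BXC (h : HasSignPattern d' (gXC d' V) p q) (hp : -(d' : ℤ) ≤ p)
    (hp' : p ≤ d') (hlt : SXC d' V (q - 1) < BXC d' V q) : q = p + 1 := by
  have hpq := h.lt hp hp'
  by_contra hne
  have := h.zero (q - 1) (by omega) (by omega)
  have := BXC_anti (d' := d') V (show q - 1 ≤ q by omega)
  unfold gXC at *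
  omega

lemma snd_eq_zero (h : HasSignPattern d' (gXC d' V) p q) (hV : suppIn d' V.2) {i : ℤ}
    (h₁ : p + 1 < i) (h₂ : i < q) : V.2 i = 0 := by
  have := SXC_eq_add V hV i
  have := BXC_anti (d' := d') V (show i - 1 ≤ i by omega)
  have := h.zero i (by omega) h₂
  have := h.zero (i - 1) (by omega) (by omega)
  unfold gXC at *
  omega

end HasSignPattern

section
variable {d' : ℕ} {Y : EC}

lemma exists_cut_tsub_clearC (hY₁ : suppIn d' Y.1) (hY₂ : suppIn d' Y.2)
    (hp : -(d' : ℤ) ≤ pBC d' Y) (hq : pAC d' Y ≤ d') :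
    ∃ c ∈ Icc (-(d' : ℤ)) d', (∀ i, Y.2 i - clearMinusC d' Y i ≠ 0 → i ≤ c) ∧
      ∀ j, Y.1 j - clearPlusC d' Y j ≠ 0 → c ≤ j := by
  have hg := hasSignPattern_gXC hp hq
  have hpI := mem_Icc.1 (mem_filter.1 (pBC_mem hp)).1
  have hpq := hg.lt hp hpI.2
  -- If the buy queue at `p_B` is partially executed, then `p_A = p_B + 1` and the sell queue at
  -- `p_A` is fully executed; otherwise no sell order above `p_B + 1` is removed.
  by_cases hlt : BXC d' Y (pBC d' Y + 1) < SXC d' Y (pBC d' Y)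
  · have hq' := hg.eq_succ_of_BXC_lt_SXC hp hpI.2 hlt
    refine ⟨pBC d' Y, mem_Icc.2 hpI, fun i hi => ?_, fun j hj => ?_⟩
    · rcases lt_pAC_or_eq_of_tsub_clearMinusC_ne_zero hY₂ hq hi with hi' | ⟨rfl, hi'⟩
      · omega
      · rw [hq', add_sub_cancel_right] at hi'
        omega
    · rcases pBC_lt_or_eq_of_tsub_clearPlusC_ne_zero hY₁ hp hj with hj | ⟨rfl, -⟩ <;> omega
  · refine ⟨pBC d' Y + 1, mem_Icc.2 ⟨by omega, by omega⟩, fun i hi => ?_, fun j hj => ?_⟩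
    · rcases lt_pAC_or_eq_of_tsub_clearMinusC_ne_zero hY₂ hq hi with hi' | ⟨rfl, hi'⟩
      · by_contra hpi
        exact hi (by rw [hg.snd_eq_zero hY₂ (by omega) hi', zero_tsub])
      · have := hg.eq_succ_of_SXC_lt_BXC hp hpI.2 hi'
        omega
    · rcases pBC_lt_or_eq_of_tsub_clearPlusC_ne_zero hY₁ hp hj with hj' | ⟨rfl, hj'⟩
      · omega
      · exact absurd hj' hlt

lemma mem_GammaM_iff {X Y : EC} :
    Y ∈ GammaM d' X ↔ Y ∈ Em d' ∧ X ≤ Y ∧ BXC d' (Y - X) (-d') = SXC d' (Y - X) d' ∧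
      supD d' (suppC d' (Y - X).2) ≤ infD d' (suppC d' (Y - X).1) ∧
      supD d' (suppC d' (Y - X).2) ≤ aC d' X ∧ bC d' X ≤ infD d' (suppC d' (Y - X).1) := by
  have hsupp₁ : ((Icc (-(d' : ℤ)) d').filter fun j => X.1 j < Y.1 j) = suppC d' (Y - X).1 :=
    filter_congr fun j _ => by simp
  have hsupp₂ : ((Icc (-(d' : ℤ)) d').filter fun j => X.2 j < Y.2 j) = suppC d' (Y - X).2 :=
    filter_congr fun j _ => by simp
  have hle : X ≤ Y ↔ ∀ j, X.1 j ≤ Y.1 j ∧ X.2 j ≤ Y.2 j := by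
    simp [Prod.le_def, Pi.le_def, forall_and]
  simp only [GammaM, Set.mem_ofPred_eq, hsupp₁, hsupp₂, hle]
  refine and_congr_right fun _ => and_congr_right fun h => and_congr_left' ?_
  rw [BXC_neg_eq_sum, SXC_eq_sum, ← Nat.cast_inj (R := ℤ), Nat.cast_sum, Nat.cast_sum]
  simp only [Prod.fst_sub, Prod.snd_sub, Pi.sub_apply, Nat.cast_sub (h _).1,
    Nat.cast_sub (h _).2]

lemma mem_GammaM_clearC (hY : Y ∈ Em d') (hX : clearC d' Y ∈ Em d') :
    Y ∈ GammaM d' (clearC d' Y) := by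
  have hY₁ := hY.1
  have hY₂ := hY.2.1
  have hp := neg_le_pBC_of_clearPlusC_ne_zero hX.2.2.1
  have hq := pAC_le_of_clearMinusC_ne_zero hX.2.2.2
  have hpI := mem_Icc.1 (mem_filter.1 (pBC_mem hp)).1
  have hqI := mem_Icc.1 (mem_filter.1 (pAC_mem hq)).1
  obtain ⟨c, hc, hcut₂, hcut₁⟩ := exists_cut_tsub_clearC hY₁ hY₂ hp hq
  rw [mem_Icc] at hc
  have hsell : ∀ i ∈ suppC d' (Y - clearC d' Y).2, i ≤ pAC d' Y := fun i hi => by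
    rcases lt_pAC_or_eq_of_tsub_clearMinusC_ne_zero hY₂ hq (mem_suppC.1 hi).2.ne' with h | h <;>
      omega
  have hbuy : ∀ j ∈ suppC d' (Y - clearC d' Y).1, pBC d' Y ≤ j := fun j hj => by
    rcases pBC_lt_or_eq_of_tsub_clearPlusC_ne_zero hY₁ hp (mem_suppC.1 hj).2.ne' with h | h <;>
      omega
  have hb : bC d' (clearC d' Y) ≤ pBC d' Y := supD_le hp fun j hj => by
    by_contra h
    exact (mem_suppC.1 hj).2.ne' (clearPlusC_eq_zero_of_lt hY₁ hp (not_le.1 h))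
  have ha : pAC d' Y ≤ aC d' (clearC d' Y) := le_infD hq fun j hj => by
    by_contra h
    exact (mem_suppC.1 hj).2.ne' (clearMinusC_eq_zero_of_lt hY₂ hq (not_le.1 h))
  refine mem_GammaM_iff.2 ⟨hY, ⟨clearPlusC_le hY₁ hp, clearMinusC_le hY₂ hq⟩, ?_, ?_, ?_, ?_⟩
  · rw [BXC_tsub_clearC hY₁ hp, SXC_tsub_clearC hY₂ hq,
      (hasSignPattern_gXC hp hq).max_BXC_SXC_eq hp hpI.2]
  · exact (supD_le hc.1 fun i hi => hcut₂ i (mem_suppC.1 hi).2.ne').trans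
      (le_infD hc.2 fun j hj => hcut₁ j (mem_suppC.1 hj).2.ne')
  · exact (supD_le (by omega) hsell).trans ha
  · exact hb.trans (le_infD hpI.2 hbuy)

end

section
variable {d' : ℕ} {X Y : EC}

lemma SXC_eq_zero_of_lt_aC (hX : suppIn d' X.2) {k : ℤ} (hk : k < aC d' X) :
    SXC d' X k = 0 :=
  SXC_eq_zero X fun _ hj => eq_zero_of_lt_infD_suppC hX (lt_of_le_of_lt hj hk)

lemma BXC_eq_zero_of_bC_lt (hX : suppIn d' X.1) {k : ℤ} (hk : bC d' X < k) :
    BXC d' X k = 0 :=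
  BXC_eq_zero X fun _ hj => eq_zero_of_supD_suppC_lt hX (lt_of_lt_of_le hk hj)

lemma gXC_eq_neg_fst (hX₁ : suppIn d' X.1) (hX₂ : suppIn d' X.2) {k : ℤ} (hb : bC d' X ≤ k)
    (ha : k < aC d' X) : gXC d' X k = -X.1 k := by
  rw [gXC, SXC_eq_zero_of_lt_aC hX₂ ha, BXC_eq_add X hX₁ k,
    BXC_eq_zero_of_bC_lt hX₁ (show bC d' X < k + 1 by omega)]
  simp

lemma gXC_eq_snd (hX₁ : suppIn d' X.1) (hX₂ : suppIn d' X.2) {k : ℤ} (hb : bC d' X < k)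
    (ha : k ≤ aC d' X) : gXC d' X k = X.2 k := by
  rw [gXC, BXC_eq_zero_of_bC_lt hX₁ hb, SXC_eq_add X hX₂ k,
    SXC_eq_zero_of_lt_aC hX₂ (show k - 1 < aC d' X by omega)]
  simp

lemma hasSignPattern_gXC_of_mem_L0 (hX : X ∈ L0 d') :
    HasSignPattern d' (gXC d' X) (bC d' X) (aC d' X) := by
  obtain ⟨⟨hX₁, hX₂, hne₁, hne₂⟩, hba⟩ := hX
  have hb : 0 < X.1 (bC d' X) := pos_supD_suppC (suppC_nonempty hX₁ hne₁)
  have ha : 0 < X.2 (aC d' X) := pos_infD_suppC (suppC_nonempty hX₂ hne₂)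
  have hgb := gXC_eq_neg_fst hX₁ hX₂ le_rfl hba
  have hga := gXC_eq_snd hX₁ hX₂ hba le_rfl
  refine ⟨fun k _ hk => ?_, fun k hbk hka => ?_, fun k hk _ => ?_⟩
  · have := gXC_mono (d' := d') X hk
    omega
  · rw [gXC_eq_neg_fst hX₁ hX₂ hbk.le hka, eq_zero_of_supD_suppC_lt hX₁ hbk, Nat.cast_zero,
      neg_zero]
  · have := gXC_mono (d' := d') X hk
    omega

lemma hasSignPattern_gXC_of_supD_le_infD {Z : EC} (hZ₁ : suppIn d' Z.1)
    (hZ₂ : suppIn d' Z.2) (hm : BXC d' Z (-d') = SXC d' Z d')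
    (hst : supD d' (suppC d' Z.2) ≤ infD d' (suppC d' Z.1)) :
    HasSignPattern d' (gXC d' Z) (supD d' (suppC d' Z.2) - 1) (infD d' (suppC d' Z.1) + 1) := by
  set s := supD d' (suppC d' Z.2)
  set t := infD d' (suppC d' Z.1)
  have hs := mem_Icc.1 (supD_suppC_mem_Icc (d' := d') Z.2)
  have ht := mem_Icc.1 (infD_suppC_mem_Icc (d' := d') Z.1)
  have hB : ∀ k, -(d' : ℤ) ≤ k → k ≤ t → BXC d' Z k = BXC d' Z (-d') := fun k h₁ h₂ =>
    (BXC_eq_of_eq_zero Z h₁ fun _ _ hj => eq_zero_of_lt_infD_suppC hZ₁ (by omega)).symm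
  have hS : ∀ k, s ≤ k → k ≤ d' → SXC d' Z k = SXC d' Z d' := fun k h₁ h₂ =>
    (SXC_eq_of_eq_zero Z h₂ fun _ hj _ => eq_zero_of_supD_suppC_lt hZ₂ (by omega)).symm
  refine ⟨fun k hk hks => ?_, fun k h₁ h₂ => ?_, fun k htk hk => ?_⟩
  · have hpos : 0 < Z.2 s := pos_supD_suppC (nonempty_of_neg_lt_supD (d' := d') (by omega))
    have := SXC_mono (d' := d') Z (show k ≤ s - 1 by omega)
    have := SXC_eq_add Z hZ₂ s
    have := hS s le_rfl hs.2
    have := hB k hk (by omega)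
    unfold gXC
    omega
  · have := hS k (by omega) (by omega)
    have := hB k (by omega) (by omega)
    unfold gXC
    omega
  · have hpos : 0 < Z.1 t := pos_infD_suppC (nonempty_of_infD_lt (d' := d') (by omega))
    have := BXC_anti (d' := d') Z (show t + 1 ≤ k by omega)
    have := BXC_eq_add Z hZ₁ t
    have := hB t ht.1 le_rfl
    have := hS k (by omega) hk
    unfold gXC
    omega

lemma hasSignPattern_gXC_of_mem_GammaM (hX : X ∈ L0 d') (hY : Y ∈ GammaM d' X) :
    HasSignPattern d' (gXC d' Y) (max (bC d' X) (supD d' (suppC d' (Y - X).2) - 1))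
      (min (aC d' X) (infD d' (suppC d' (Y - X).1) + 1)) := by
  obtain ⟨⟨hY₁, hY₂, -⟩, hXY, hm, hst, hsa, hbt⟩ := mem_GammaM_iff.1 hY
  rw [gXC_eq_add_tsub hXY]
  exact (hasSignPattern_gXC_of_mem_L0 hX).add
    (hasSignPattern_gXC_of_supD_le_infD (hY₁.tsub _) (hY₂.tsub _) hm hst) (by omega) (by omega)

lemma clearPlusC_eq_of_mem_GammaM (hX : X ∈ L0 d') (hY : Y ∈ GammaM d' X) :
    clearPlusC d' Y = X.1 := by
  have hgY := hasSignPattern_gXC_of_mem_GammaM hX hY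
  obtain ⟨⟨hY₁, hY₂, -⟩, hXY, hm, hst, hsa, hbt⟩ := mem_GammaM_iff.1 hY
  obtain ⟨⟨hX₁, hX₂, -⟩, hba⟩ := hX
  have hgZ := hasSignPattern_gXC_of_supD_le_infD (hY₁.tsub X.1) (hY₂.tsub X.2) hm hst
  set s := supD d' (suppC d' (Y - X).2)
  set t := infD d' (suppC d' (Y - X).1)
  have hb : -(d' : ℤ) ≤ bC d' X ∧ bC d' X ≤ d' := mem_Icc.1 (supD_suppC_mem_Icc X.1)
  have hs := mem_Icc.1 (supD_suppC_mem_Icc (d' := d') (Y - X).2)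
  have ht := mem_Icc.1 (infD_suppC_mem_Icc (d' := d') (Y - X).1)
  set p := max (bC d' X) (s - 1)
  have hpB : pBC d' Y = p := pBC_eq hgY (by omega) (by omega)
  have hgp : gXC d' Y p = -X.1 p + gXC d' (Y - X) p := by
    rw [gXC_eq_add_tsub hXY, Pi.add_apply,
      gXC_eq_neg_fst hX₁ hX₂ (le_max_left _ _) (by omega)]
  have hgZp : gXC d' (Y - X) p ≤ 0 := hgZ.nonpos (by omega) (by omega)
  have hZp : Y.1 p - X.1 p ≠ 0 → gXC d' (Y - X) p = 0 := fun h => by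
    have : t ≤ p := not_lt.1 fun hpt => h (eq_zero_of_lt_infD_suppC (hY₁.tsub X.1) hpt)
    exact hgZ.zero p (by omega) (by omega)
  funext j
  have hXYj : X.1 j ≤ Y.1 j := hXY.1 j
  rw [clearPlusC_apply hY₁ (by omega), hpB]
  split_ifs with h₁ h₂
  · have : Y.1 j - X.1 j = 0 :=
      eq_zero_of_lt_infD_suppC (hY₁.tsub X.1) (show j < t by omega)
    omega
  · subst h₂
    omega
  · exact (eq_zero_of_supD_suppC_lt hX₁ (show bC d' X < j by omega)).symm

lemma clearMinusC_eq_of_mem_GammaM (hX : X ∈ L0 d') (hY : Y ∈ GammaM d' X) :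
    clearMinusC d' Y = X.2 := by
  have hgY := hasSignPattern_gXC_of_mem_GammaM hX hY
  obtain ⟨⟨hY₁, hY₂, -⟩, hXY, hm, hst, hsa, hbt⟩ := mem_GammaM_iff.1 hY
  obtain ⟨⟨hX₁, hX₂, -⟩, hba⟩ := hX
  have hgZ := hasSignPattern_gXC_of_supD_le_infD (hY₁.tsub X.1) (hY₂.tsub X.2) hm hst
  set s := supD d' (suppC d' (Y - X).2)
  set t := infD d' (suppC d' (Y - X).1)
  have ha : -(d' : ℤ) ≤ aC d' X ∧ aC d' X ≤ d' := mem_Icc.1 (infD_suppC_mem_Icc X.2)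
  have hs := mem_Icc.1 (supD_suppC_mem_Icc (d' := d') (Y - X).2)
  have ht := mem_Icc.1 (infD_suppC_mem_Icc (d' := d') (Y - X).1)
  set q := min (aC d' X) (t + 1)
  have hpA : pAC d' Y = q := pAC_eq hgY (by omega) (by omega)
  have hgq : gXC d' Y q = X.2 q + gXC d' (Y - X) q := by
    rw [gXC_eq_add_tsub hXY, Pi.add_apply, gXC_eq_snd hX₁ hX₂ (by omega) (min_le_left _ _)]
  have hgZq : 0 ≤ gXC d' (Y - X) q := hgZ.nonneg (by omega) (by omega)
  have hZq : Y.2 q - X.2 q ≠ 0 → gXC d' (Y - X) q = 0 := fun h => by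
    have : q ≤ s := not_lt.1 fun hsq => h (eq_zero_of_supD_suppC_lt (hY₂.tsub X.2) hsq)
    exact hgZ.zero q (by omega) (by omega)
  funext j
  have hXYj : X.2 j ≤ Y.2 j := hXY.2 j
  rw [clearMinusC_apply hY₂ (by omega), hpA]
  split_ifs with h₁ h₂
  · have : Y.2 j - X.2 j = 0 :=
      eq_zero_of_supD_suppC_lt (hY₂.tsub X.2) (show s < j by omega)
    omega
  · subst h₂
    omega
  · exact (eq_zero_of_lt_infD_suppC hX₂ (show j < aC d' X by omega)).symm

lemma clearC_eq_of_mem_GammaM (hX : X ∈ L0 d') (hY : Y ∈ GammaM d' X) : clearC d' Y = X :=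
  Prod.ext (clearPlusC_eq_of_mem_GammaM hX hY) (clearMinusC_eq_of_mem_GammaM hX hY)

end

theorem preimage_clearC_eq_GammaM_general (d' : ℕ) :
    ∀ X ∈ L0 d',
      {Y : EC | Y ∈ Em d' ∧ clearC d' Y = X} = GammaM d' X := by
  intro X hX
  ext Y
  constructor
  · rintro ⟨hY, rfl⟩
    exact mem_GammaM_clearC hY hX.1
  · intro hY
    exact ⟨hY.1, clearC_eq_of_mem_GammaM hX hY⟩

/-- Lemma E.4 of Cont–Degond–Xuan: pre-image of the order-matching
clearing operator in the centred framework: for `X ∈ L⁰`,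
`{Y ∈ E^m : C'(Y) = X} = Γ^m(X)`. -/
theorem preimage_clearC_eq_GammaM (d' : ℕ) (hd' : 1 ≤ d') :
    ∀ X ∈ L0 d',
      {Y : EC | Y ∈ Em d' ∧ clearC d' Y = X} = GammaM d' X :=
  preimage_clearC_eq_GammaM_general d'

end COB
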